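/- arXiv:1403.6050 — 2 statements merged into one kernel-verified Lean document; each statement's English description precedes it below -/
import Mathlib

section
/- Let Λ ⊆ ℝ^d be compact with f(Λ) = Λ. Suppose (E, F) and (E', F') are two pairs of maps on Λ, each assigning linear subspaces with ℝ^d = E(x) ⊕ F(x) = E'(x) ⊕ F'(x) for all x ∈ Λ, each Df-invariant (Df_x(E(x)) = E(f(x)), Df_x(F(x)) = F(f(x)), and similarly for E', F'), each satisfying the domination inequality for some constants C > 0, λ ∈ (0,1) and C' > 0, λ' ∈ (0,1) respectively (continuity not assumed), and with dim E(x) = dim E'(x) = i for every x ∈ Λ. Then E(x) = E'(x) and F(x) = F'(x) for all x ∈ Λ; that is, a dominated splitting of index i on Λ is unique. -/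
open Set

noncomputable section

abbrev Euc (d : ℕ) := EuclideanSpace ℝ (Fin d)

/-- f is a C¹ diffeomorphism of ℝ^d. -/
def IsC1Diffeo {d : ℕ} (f : Euc d → Euc d) : Prop :=
  Function.Bijective f ∧ ContDiff ℝ 1 f ∧
    ∃ g : Euc d → Euc d, ContDiff ℝ 1 g ∧ Function.LeftInverse g f ∧ Function.RightInverse g f

/-- The orthogonal projection onto V, as an endomorphism. -/
def projSub {d : ℕ} (V : Submodule ℝ (Euc d)) : Euc d →L[ℝ] Euc d :=
  V.subtypeL.comp (V.orthogonalProjectionOnto)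

/-- The domination inequality. -/
def DomIneq {d : ℕ} (f : Euc d → Euc d) (Λ : Set (Euc d))
    (E F : Euc d → Submodule ℝ (Euc d)) (C lam : ℝ) : Prop :=
  ∀ x ∈ Λ, ∀ n : ℕ, ∀ u ∈ E x, u ≠ 0 → ∀ v ∈ F x, v ≠ 0 →
    ‖fderiv ℝ (f^[n]) x u‖ / ‖u‖ ≤ C * lam ^ n * (‖fderiv ℝ (f^[n]) x v‖ / ‖v‖)

/-- Dominated splitting on Λ with constants C, lam. -/
def IsDomSplitting {d : ℕ} (f : Euc d → Euc d) (Λ : Set (Euc d))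
    (E F : Euc d → Submodule ℝ (Euc d)) (C lam : ℝ) : Prop :=
  (∀ x ∈ Λ, IsCompl (E x) (F x)) ∧
  (∀ x ∈ Λ, (E x).map (fderiv ℝ f x : Euc d →ₗ[ℝ] Euc d) = E (f x)) ∧
  (∀ x ∈ Λ, (F x).map (fderiv ℝ f x : Euc d →ₗ[ℝ] Euc d) = F (f x)) ∧
  ContinuousOn (fun x => projSub (E x)) Λ ∧
  ContinuousOn (fun x => projSub (F x)) Λ ∧
  DomIneq f Λ E F C lam

/-!
If `v ∉ E x`, the `F`-component of `v` is nonzero and dominates its `E`-component, so the orbit of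
`v` under the derivatives outgrows every vector of `E x`. Now take `v ∈ E' x \ E x`. A nonzero
vector of `E x ∩ F' x` would both be outgrown by `v` and outgrow it, so `E x ⊕ F' x = ℝ^d` by
dimension count. Writing `v = e + w` with `e ∈ E x`, `w ∈ F' x`, the growth of `w` is then
comparable to that of `v`, while `v ∈ E' x` is outgrown by `w`: a contradiction. Hence
`E' x ≤ E x`, and equality follows by symmetry. For the inverse diffeomorphism `F` dominates `E`,
and the same argument gives `F x = F' x`.
-/

open Filter Asymptotics Function Topology

section Domination

variable {K V W ι : Type*} [DivisionRing K] [AddCommGroup V] [Module K V]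
  [NormedAddCommGroup W] [Module K W]

def IsDominatedBy (l : Filter ι) (T : ι → V →ₗ[K] W) (E F : Submodule K V) : Prop :=
  ∀ u ∈ E, ∀ v ∈ F, v ≠ 0 → (fun i => T i u) =o[l] (fun i => T i v)

variable {l : Filter ι} {T : ι → V →ₗ[K] W} {E F E' F' : Submodule K V}

theorem IsDominatedBy.isLittleO_of_notMem (h : IsDominatedBy l T E F) (hc : IsCompl E F)
    {u v : V} (hu : u ∈ E) (hv : v ∉ E) : (fun i => T i u) =o[l] (fun i => T i v) := by
  obtain ⟨a, ha, b, hb, rfl⟩ :=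
    Submodule.mem_sup.1 (hc.sup_eq_top ▸ Submodule.mem_top : v ∈ E ⊔ F)
  have hb0 : b ≠ 0 := by rintro rfl; exact hv (by simpa using ha)
  have hbv : (fun i => T i b) =O[l] (fun i => T i (a + b)) := by
    simpa only [map_add] using (h a ha b hb hb0).right_isBigO_add
  exact (h u hu b hb hb0).trans_isBigO hbv

theorem IsDominatedBy.le [FiniteDimensional K V] [l.NeBot] (hT : ∀ i, Injective (T i))
    (h : IsDominatedBy l T E F) (h' : IsDominatedBy l T E' F') (hc : IsCompl E F)
    (hc' : IsCompl E' F') (hrank : Module.finrank K E = Module.finrank K E') : E' ≤ E := by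
  have not_isLittleO_self : ∀ w ≠ 0, ¬(fun i => T i w) =o[l] (fun i => T i w) := fun w hw =>
    isLittleO_irrefl (Frequently.of_forall fun i => (map_ne_zero_iff _ (hT i)).2 hw)
  intro v hv'
  by_contra hv
  have hv0 : v ≠ 0 := by rintro rfl; exact hv E.zero_mem
  have hdisj : Disjoint E F' := by
    refine Submodule.disjoint_def.2 fun e he he' => ?_
    by_contra he0
    exact not_isLittleO_self e he0 ((h.isLittleO_of_notMem hc he hv).trans (h' v hv' e he' he0))
  have hcompl : IsCompl E F' := by
    refine (Submodule.isCompl_iff_disjoint _ _ ?_).2 hdisj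
    rw [hrank, Submodule.finrank_add_eq_of_isCompl hc']
  obtain ⟨e, he, w, hw, rfl⟩ :=
    Submodule.mem_sup.1 (hcompl.sup_eq_top ▸ Submodule.mem_top : v ∈ E ⊔ F')
  have hw0 : w ≠ 0 := by rintro rfl; exact hv (by simpa using he)
  have hvw := h' _ hv' w hw hw0
  have hwv : (fun i => T i w) =O[l] (fun i => T i (e + w)) := by
    simpa only [map_add] using ((h.isLittleO_of_notMem hc he hv).trans hvw).right_isBigO_add
  exact not_isLittleO_self _ hv0 (hvw.trans_isBigO hwv)

theorem IsDominatedBy.eq [FiniteDimensional K V] [l.NeBot] (hT : ∀ i, Injective (T i))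
    (h : IsDominatedBy l T E F) (h' : IsDominatedBy l T E' F') (hc : IsCompl E F)
    (hc' : IsCompl E' F') (hrank : Module.finrank K E = Module.finrank K E') : E = E' :=
  le_antisymm (h'.le hT h hc' hc hrank.symm) (h.le hT h' hc hc' hrank)

end Domination

section Iterates

variable {𝕜 X : Type*} [NontriviallyNormedField 𝕜] [NormedAddCommGroup X] [NormedSpace 𝕜 X]
  {f g : X → X}

theorem fderiv_iterate_comp_fderiv_iterate (hf : Differentiable 𝕜 f) (hg : Differentiable 𝕜 g)
    (hgf : LeftInverse g f) (n : ℕ) (x : X) :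
    (fderiv 𝕜 g^[n] (f^[n] x)).comp (fderiv 𝕜 f^[n] x) = ContinuousLinearMap.id 𝕜 X := by
  rw [← fderiv_comp x ((hg.iterate n).differentiableAt) ((hf.iterate n).differentiableAt),
    (hgf.iterate n).comp_eq_id, fderiv_id]

theorem injective_fderiv_iterate (hf : Differentiable 𝕜 f) (hg : Differentiable 𝕜 g)
    (hgf : LeftInverse g f) (n : ℕ) (x : X) : Injective (fderiv 𝕜 f^[n] x) :=
  LeftInverse.injective (g := fderiv 𝕜 g^[n] (f^[n] x)) fun v => by
    rw [← ContinuousLinearMap.comp_apply, fderiv_iterate_comp_fderiv_iterate hf hg hgf,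
      ContinuousLinearMap.id_apply]

theorem map_fderiv_iterate {Λ : Set X} {S : X → Submodule 𝕜 X} (hf : Differentiable 𝕜 f)
    (hΛ : MapsTo f Λ Λ) (hS : ∀ x ∈ Λ, (S x).map (fderiv 𝕜 f x : X →ₗ[𝕜] X) = S (f x))
    (n : ℕ) {x : X} (hx : x ∈ Λ) : (S x).map (fderiv 𝕜 f^[n] x : X →ₗ[𝕜] X) = S (f^[n] x) := by
  induction n with
  | zero => simp
  | succ n ih =>
    rw [iterate_succ', fderiv_comp x hf.differentiableAt (hf.iterate n).differentiableAt,
      ContinuousLinearMap.toLinearMap_comp, Submodule.map_comp, ih, comp_apply,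
      hS _ (hΛ.iterate n hx)]

theorem fderiv_iterate_mem_of_leftInverse {Λ : Set X} {S : X → Submodule 𝕜 X}
    (hf : Differentiable 𝕜 f) (hg : Differentiable 𝕜 g) (hgf : LeftInverse g f)
    (hΛ : MapsTo f Λ Λ) (hS : ∀ x ∈ Λ, (S x).map (fderiv 𝕜 f x : X →ₗ[𝕜] X) = S (f x))
    (n : ℕ) {y v : X} (hy : y ∈ Λ) (hv : v ∈ S (f^[n] y)) : fderiv 𝕜 g^[n] (f^[n] y) v ∈ S y := by
  rw [← map_fderiv_iterate hf hΛ hS n hy] at hv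
  obtain ⟨w, hw, rfl⟩ := hv
  rwa [ContinuousLinearMap.coe_coe, ← ContinuousLinearMap.comp_apply,
    fderiv_iterate_comp_fderiv_iterate hf hg hgf, ContinuousLinearMap.id_apply]

end Iterates

section DominatedSplitting

variable {d : ℕ} {f g : Euc d → Euc d} {Λ : Set (Euc d)} {E F : Euc d → Submodule ℝ (Euc d)}
  {C lam : ℝ}

theorem DomIneq.isDominatedBy (h : DomIneq f Λ E F C lam) (hlam0 : 0 ≤ lam) (hlam1 : lam < 1)
    {x : Euc d} (hx : x ∈ Λ) :
    IsDominatedBy atTop (fun n => (fderiv ℝ f^[n] x : Euc d →ₗ[ℝ] Euc d)) (E x) (F x) := by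
  intro u hu v hv hv0
  rcases eq_or_ne u 0 with rfl | hu0
  · simpa only [map_zero] using isLittleO_zero _ _
  have hcoef : Tendsto (fun n : ℕ => C * lam ^ n * (‖u‖ / ‖v‖)) atTop (𝓝 0) := by
    simpa using ((tendsto_pow_atTop_nhds_zero_of_lt_one hlam0 hlam1).const_mul C).mul_const
      (‖u‖ / ‖v‖)
  refine isLittleO_iff.2 fun c hc => ?_
  filter_upwards [hcoef.eventually (ge_mem_nhds hc)] with n hn
  have hnu : 0 < ‖u‖ := norm_pos_iff.2 hu0
  have key := h x hx n u hu hu0 v hv hv0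
  simp only [ContinuousLinearMap.coe_coe]
  calc ‖fderiv ℝ f^[n] x u‖ = ‖u‖ * (‖fderiv ℝ f^[n] x u‖ / ‖u‖) := by field_simp
    _ ≤ ‖u‖ * (C * lam ^ n * (‖fderiv ℝ f^[n] x v‖ / ‖v‖)) := by gcongr
    _ = C * lam ^ n * (‖u‖ / ‖v‖) * ‖fderiv ℝ f^[n] x v‖ := by ring
    _ ≤ c * ‖fderiv ℝ f^[n] x v‖ := by gcongr

theorem DomIneq.inverse (h : DomIneq f Λ E F C lam) (hf : Differentiable ℝ f)
    (hg : Differentiable ℝ g) (hgf : LeftInverse g f) (hfg : RightInverse g f)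
    (hfΛ : MapsTo f Λ Λ) (hgΛ : MapsTo g Λ Λ)
    (hE : ∀ x ∈ Λ, (E x).map (fderiv ℝ f x : Euc d →ₗ[ℝ] Euc d) = E (f x))
    (hF : ∀ x ∈ Λ, (F x).map (fderiv ℝ f x : Euc d →ₗ[ℝ] Euc d) = F (f x)) :
    DomIneq g Λ F E C lam := by
  intro x hx n u hu hu0 v hv hv0
  obtain ⟨y, hy, rfl⟩ : ∃ y ∈ Λ, f^[n] y = x := ⟨g^[n] _, hgΛ.iterate n hx, hfg.iterate n x⟩
  set B := fderiv ℝ g^[n] (f^[n] y)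
  have hAB : ∀ w, fderiv ℝ f^[n] y (B w) = w := fun w => by
    have := fderiv_iterate_comp_fderiv_iterate hg hf hfg n (f^[n] y)
    rw [hgf.iterate n y] at this
    rw [← ContinuousLinearMap.comp_apply, this, ContinuousLinearMap.id_apply]
  have hBu0 : B u ≠ 0 := fun h0 => hu0 (by rw [← hAB u, h0, map_zero])
  have hBv0 : B v ≠ 0 := fun h0 => hv0 (by rw [← hAB v, h0, map_zero])
  have key := h y hy n (B v) (fderiv_iterate_mem_of_leftInverse hf hg hgf hfΛ hE n hy hv) hBv0
    (B u) (fderiv_iterate_mem_of_leftInverse hf hg hgf hfΛ hF n hy hu) hBu0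
  rw [hAB, hAB, ← mul_div_assoc, div_le_div_iff₀ (norm_pos_iff.2 hBv0) (norm_pos_iff.2 hBu0)]
    at key
  rw [← mul_div_assoc, div_le_div_iff₀ (norm_pos_iff.2 hu0) (norm_pos_iff.2 hv0)]
  linarith

end DominatedSplitting

theorem dominated_splitting_unique_general
    {d : ℕ} (f : Euc d → Euc d) (hf : IsC1Diffeo f)
    (Λ : Set (Euc d)) (hinv : f '' Λ = Λ)
    (E F E' F' : Euc d → Submodule ℝ (Euc d)) (i : ℕ)
    (hcompl : ∀ x ∈ Λ, IsCompl (E x) (F x))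
    (hcompl' : ∀ x ∈ Λ, IsCompl (E' x) (F' x))
    (hEinv : ∀ x ∈ Λ, (E x).map (fderiv ℝ f x : Euc d →ₗ[ℝ] Euc d) = E (f x))
    (hFinv : ∀ x ∈ Λ, (F x).map (fderiv ℝ f x : Euc d →ₗ[ℝ] Euc d) = F (f x))
    (hEinv' : ∀ x ∈ Λ, (E' x).map (fderiv ℝ f x : Euc d →ₗ[ℝ] Euc d) = E' (f x))
    (hFinv' : ∀ x ∈ Λ, (F' x).map (fderiv ℝ f x : Euc d →ₗ[ℝ] Euc d) = F' (f x))
    (C lam : ℝ) (hlam0 : 0 < lam) (hlam1 : lam < 1)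
    (C' lam' : ℝ) (hlam0' : 0 < lam') (hlam1' : lam' < 1)
    (hdom : DomIneq f Λ E F C lam) (hdom' : DomIneq f Λ E' F' C' lam')
    (hdim : ∀ x ∈ Λ, Module.finrank ℝ (E x) = i)
    (hdim' : ∀ x ∈ Λ, Module.finrank ℝ (E' x) = i) :
    ∀ x ∈ Λ, E x = E' x ∧ F x = F' x := by
  obtain ⟨-, hfC1, g, hgC1, hgf, hfg⟩ := hf
  have hfd : Differentiable ℝ f := hfC1.differentiable one_ne_zero
  have hgd : Differentiable ℝ g := hgC1.differentiable one_ne_zero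
  have hfΛ : MapsTo f Λ Λ := (mapsTo_image f Λ).mono_right hinv.subset
  have hgΛ : MapsTo g Λ Λ := by
    rintro _ hx
    obtain ⟨y, hy, rfl⟩ := hinv.symm ▸ hx
    rwa [hgf y]
  have hgdom := hdom.inverse hfd hgd hgf hfg hfΛ hgΛ hEinv hFinv
  have hgdom' := hdom'.inverse hfd hgd hgf hfg hfΛ hgΛ hEinv' hFinv'
  intro x hx
  have hrankF : Module.finrank ℝ (F x) = Module.finrank ℝ (F' x) := by
    have := Submodule.finrank_add_eq_of_isCompl (hcompl x hx)
    have := Submodule.finrank_add_eq_of_isCompl (hcompl' x hx)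
    have := hdim x hx
    have := hdim' x hx
    omega
  exact ⟨(hdom.isDominatedBy hlam0.le hlam1 hx).eq
      (fun n => injective_fderiv_iterate hfd hgd hgf n x)
      (hdom'.isDominatedBy hlam0'.le hlam1' hx) (hcompl x hx) (hcompl' x hx)
      ((hdim x hx).trans (hdim' x hx).symm),
    (hgdom.isDominatedBy hlam0.le hlam1 hx).eq
      (fun n => injective_fderiv_iterate hgd hfd hfg n x)
      (hgdom'.isDominatedBy hlam0'.le hlam1' hx) (hcompl x hx).symm (hcompl' x hx).symm hrankF⟩

/-- Uniqueness of a dominated splitting of given index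
(continuity not assumed). -/
theorem dominated_splitting_unique
    {d : ℕ} (hd : 1 ≤ d) (f : Euc d → Euc d) (hf : IsC1Diffeo f)
    (Λ : Set (Euc d)) (hΛ : IsCompact Λ) (hinv : f '' Λ = Λ)
    (E F E' F' : Euc d → Submodule ℝ (Euc d)) (i : ℕ)
    (hcompl : ∀ x ∈ Λ, IsCompl (E x) (F x))
    (hcompl' : ∀ x ∈ Λ, IsCompl (E' x) (F' x))
    (hEinv : ∀ x ∈ Λ, (E x).map (fderiv ℝ f x : Euc d →ₗ[ℝ] Euc d) = E (f x))
    (hFinv : ∀ x ∈ Λ, (F x).map (fderiv ℝ f x : Euc d →ₗ[ℝ] Euc d) = F (f x))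
    (hEinv' : ∀ x ∈ Λ, (E' x).map (fderiv ℝ f x : Euc d →ₗ[ℝ] Euc d) = E' (f x))
    (hFinv' : ∀ x ∈ Λ, (F' x).map (fderiv ℝ f x : Euc d →ₗ[ℝ] Euc d) = F' (f x))
    (C lam : ℝ) (hC : 0 < C) (hlam0 : 0 < lam) (hlam1 : lam < 1)
    (C' lam' : ℝ) (hC' : 0 < C') (hlam0' : 0 < lam') (hlam1' : lam' < 1)
    (hdom : DomIneq f Λ E F C lam) (hdom' : DomIneq f Λ E' F' C' lam')
    (hdim : ∀ x ∈ Λ, Module.finrank ℝ (E x) = i)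
    (hdim' : ∀ x ∈ Λ, Module.finrank ℝ (E' x) = i) :
    ∀ x ∈ Λ, E x = E' x ∧ F x = F' x :=
  dominated_splitting_unique_general f hf Λ hinv E F E' F' i hcompl hcompl' hEinv hFinv hEinv'
    hFinv' C lam hlam0 hlam1 C' lam' hlam0' hlam1' hdom hdom' hdim hdim'
end
end

section
/- Let Λ ⊆ ℝ^d be compact with f(Λ) = Λ and let (E, F) be a dominated splitting on Λ with constants C > 0, λ ∈ (0,1). Then there exist an adapted family of norms and λ' ∈ (0,1) with which the domination is seen in one step: a continuous map assigning to each x ∈ Λ an inner product ⟨·,·⟩_x on ℝ^d, whose induced norms |·|_x are uniformly equivalent to the Euclidean norm (there is c ≥ 1 with c⁻¹‖v‖ ≤ |v|_x ≤ c‖v‖ for all x ∈ Λ, v ∈ ℝ^d), such that for every x ∈ Λ and all nonzero u ∈ E(x), v ∈ F(x): |Df_x u|_{f(x)}/|u|_x ≤ λ'·|Df_x v|_{f(x)}/|v|_x. -/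
open Set

noncomputable section

/-!
Let `Φ(z)` be the logarithm of the norm of `Df^K_z` on `E(z)` (clamped from below so that it is
continuous). Along an orbit in `Λ`, `log ‖Df^n u‖` changes by at most `log M` per step, where `M`
bounds `Df` and its inverse on `Λ`. Summing the `K`-step increments over a window of `N = K²`
steps therefore shows that over the window vectors of `E` grow at most like `exp ∑ ψ(f^i x)`, and,
by domination, vectors of `F` at least like `exp ∑ (ψ(f^i x) + γ)`, where `ψ = (Φ + 2 log M) / K`
is continuous and the gap `γ = -log λ - (log C + 4 log M) / K` is positive for `K` large.

For such a continuous rate `ψ`, the Lyapunov norm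
`|w|²_x = ∑_{j<N} exp(-2 (ψ(x) + ⋯ + ψ(f^{j-1} x))) ‖Df^j_x w‖²`
satisfies `|Df_x w|²_{f x} = e^{2ψ(x)} (|w|²_x + exp(-2 ∑_{i<N} ψ(f^i x)) ‖Df^N_x w‖² - ‖w‖²)`
(the sum at `f x` is the sum at `x` shifted by one index), so it is contracted by `e^{ψ(x)}` on `E`
and, with `ψ + γ` in place of `ψ`, expanded by `e^{ψ(x) + γ}` on `F`. Gluing the two norms with the
oblique projections of `E ⊕ F`, which depend continuously on `x`, gives the adapted inner product,
with `λ' = e^{-γ}`.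
-/

open Finset Real

section RealInequalities

lemma abs_log_sub_log_le {a b M : ℝ} (ha : 0 < a) (hb : 0 < b) (hab : a ≤ M * b)
    (hba : b ≤ M * a) : |log a - log b| ≤ log M := by
  have hM : 0 < M := pos_of_mul_pos_left (ha.trans_le hab) hb.le
  have h₁ := log_le_log ha hab
  have h₂ := log_le_log hb hba
  rw [log_mul hM.ne' hb.ne'] at h₁
  rw [log_mul hM.ne' ha.ne'] at h₂
  rw [abs_le]
  constructor <;> linarith

lemma log_sub_log_le_iff {a b s : ℝ} (ha : 0 < a) (hb : 0 < b) :
    log a - log b ≤ s ↔ a ≤ exp s * b := by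
  rw [← log_div ha.ne' hb.ne', log_le_iff_le_exp (div_pos ha hb), div_le_iff₀ hb]

lemma le_log_sub_log_iff {a b s : ℝ} (ha : 0 < a) (hb : 0 < b) :
    s ≤ log a - log b ↔ exp s * b ≤ a := by
  rw [← log_div ha.ne' hb.ne', le_log_iff_exp_le (div_pos ha hb), le_div_iff₀ hb]

lemma sqrt_exp_two_mul_mul (s a : ℝ) : √(exp (2 * s) * a) = exp s * √a := by
  rw [sqrt_mul (exp_pos _).le, show exp (2 * s) = exp s ^ 2 by rw [sq, ← exp_add, two_mul],
    sqrt_sq (exp_pos s).le]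

lemma inv_mul_le_sqrt_and_sqrt_le_mul {a q c : ℝ} (ha : 0 ≤ a) (hlow : a ^ 2 / 2 ≤ q)
    (hup : q ≤ c * a ^ 2) : (max c 2)⁻¹ * a ≤ √q ∧ √q ≤ max c 2 * a := by
  have hc2 : (2 : ℝ) ≤ max c 2 := le_max_right _ _
  have hc : c ≤ max c 2 := le_max_left _ _
  constructor
  · rw [le_sqrt (by positivity) ((by positivity : (0 : ℝ) ≤ a ^ 2 / 2).trans hlow)]
    calc ((max c 2)⁻¹ * a) ^ 2 = a ^ 2 / (max c 2) ^ 2 := by field_simp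
      _ ≤ a ^ 2 / 2 := by gcongr; nlinarith
      _ ≤ q := hlow
  · rw [sqrt_le_left (by positivity)]
    have : c * a ^ 2 ≤ (max c 2) ^ 2 * a ^ 2 := by gcongr; nlinarith
    linarith [mul_pow (max c 2) a 2]

end RealInequalities

section WindowSums

variable {ℓ : ℕ → ℝ} {L : ℝ}

lemma abs_sub_le_mul_of_abs_succ_sub_le (hℓ : ∀ j, |ℓ (j + 1) - ℓ j| ≤ L) (a i : ℕ) :
    |ℓ (a + i) - ℓ a| ≤ i * L := by
  induction i with
  | zero => simp
  | succ i ih =>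
    calc |ℓ (a + (i + 1)) - ℓ a| ≤ |ℓ (a + i + 1) - ℓ (a + i)| + |ℓ (a + i) - ℓ a| :=
          abs_sub_le _ _ _
      _ ≤ L + i * L := add_le_add (hℓ _) ih
      _ = (i + 1 : ℕ) * L := by push_cast; ring

lemma sum_range_sub_shift (ℓ : ℕ → ℝ) (N K : ℕ) :
    ∑ k ∈ range N, (ℓ (k + K) - ℓ k) = ∑ i ∈ range K, (ℓ (N + i) - ℓ i) := by
  have h₁ := sum_range_add ℓ K N
  have h₂ := sum_range_add ℓ N K
  have h₃ : ∑ k ∈ range N, ℓ (k + K) = ∑ k ∈ range N, ℓ (K + k) :=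
    sum_congr rfl fun k _ => by rw [add_comm]
  rw [add_comm K N] at h₁
  simp only [sum_sub_distrib]
  linarith

lemma abs_sum_sub_shift_sub_le (hℓ : ∀ j, |ℓ (j + 1) - ℓ j| ≤ L) (N K : ℕ) :
    |∑ k ∈ range N, (ℓ (k + K) - ℓ k) - K * (ℓ N - ℓ 0)| ≤ 2 * K ^ 2 * L := by
  have hL : 0 ≤ L := (abs_nonneg _).trans (hℓ 0)
  have hterm : ∀ i ∈ range K, |(ℓ (N + i) - ℓ i) - (ℓ N - ℓ 0)| ≤ 2 * K * L := by
    intro i hi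
    have hiK : (i : ℝ) ≤ K := by exact_mod_cast (mem_range.mp hi).le
    have h₀ := abs_sub_le_mul_of_abs_succ_sub_le hℓ 0 i
    rw [zero_add] at h₀
    calc |(ℓ (N + i) - ℓ i) - (ℓ N - ℓ 0)| = |(ℓ (N + i) - ℓ N) - (ℓ i - ℓ 0)| := by ring_nf
      _ ≤ |ℓ (N + i) - ℓ N| + |ℓ i - ℓ 0| := abs_sub _ _
      _ ≤ i * L + i * L := add_le_add (abs_sub_le_mul_of_abs_succ_sub_le hℓ N i) h₀
      _ ≤ 2 * K * L := by nlinarith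
  calc |∑ k ∈ range N, (ℓ (k + K) - ℓ k) - K * (ℓ N - ℓ 0)|
      = |∑ i ∈ range K, ((ℓ (N + i) - ℓ i) - (ℓ N - ℓ 0))| := by
        rw [sum_range_sub_shift]
        simp only [sum_sub_distrib, sum_const, card_range, nsmul_eq_mul, mul_sub]
    _ ≤ ∑ i ∈ range K, |(ℓ (N + i) - ℓ i) - (ℓ N - ℓ 0)| := abs_sum_le_sum_abs _ _
    _ ≤ ∑ _i ∈ range K, 2 * K * L := sum_le_sum hterm
    _ = 2 * K ^ 2 * L := by rw [sum_const, card_range, nsmul_eq_mul]; ring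

lemma sub_le_sum_of_sub_shift_le (hℓ : ∀ j, |ℓ (j + 1) - ℓ j| ≤ L) {K : ℕ} (hK : 0 < K)
    {a : ℕ → ℝ} (ha : ∀ k, ℓ (k + K) - ℓ k ≤ a k) :
    ℓ (K * K) - ℓ 0 ≤ ∑ k ∈ range (K * K), (a k + 2 * L) / K := by
  have hw := (abs_le.mp (abs_sum_sub_shift_sub_le hℓ (K * K) K)).1
  have hs := sum_le_sum fun k (_ : k ∈ range (K * K)) => ha k
  have hK' : (0 : ℝ) < K := by exact_mod_cast hK
  rw [← sum_div, sum_add_distrib, sum_const, card_range, nsmul_eq_mul, le_div_iff₀ hK']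
  push_cast
  nlinarith

lemma sum_le_sub_of_le_sub_shift (hℓ : ∀ j, |ℓ (j + 1) - ℓ j| ≤ L) {K : ℕ} (hK : 0 < K)
    {a : ℕ → ℝ} (ha : ∀ k, a k ≤ ℓ (k + K) - ℓ k) :
    ∑ k ∈ range (K * K), (a k - 2 * L) / K ≤ ℓ (K * K) - ℓ 0 := by
  have hw := (abs_le.mp (abs_sum_sub_shift_sub_le hℓ (K * K) K)).2
  have hs := sum_le_sum fun k (_ : k ∈ range (K * K)) => ha k
  have hK' : (0 : ℝ) < K := by exact_mod_cast hK
  rw [← sum_div, sum_sub_distrib, sum_const, card_range, nsmul_eq_mul, div_le_iff₀ hK']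
  push_cast
  nlinarith

end WindowSums

section LyapunovSums

def lyapSum (s q : ℕ → ℝ) (N : ℕ) : ℝ :=
  ∑ j ∈ range N, exp (-(2 * ∑ i ∈ range j, s i)) * q j

lemma lyapSum_shift (s q : ℕ → ℝ) (N : ℕ) :
    lyapSum (fun i => s (i + 1)) (fun j => q (j + 1)) N =
      exp (2 * s 0) * (lyapSum s q N + exp (-(2 * ∑ i ∈ range N, s i)) * q N - q 0) := by
  have hw : ∀ j, exp (-(2 * ∑ i ∈ range j, s (i + 1))) =
      exp (2 * s 0) * exp (-(2 * ∑ i ∈ range (j + 1), s i)) := by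
    intro j
    rw [← exp_add, sum_range_succ']
    ring_nf
  have hsplit := sum_range_succ' (fun j => exp (-(2 * ∑ i ∈ range j, s i)) * q j) N
  rw [sum_range_succ] at hsplit
  simp only [range_zero, sum_empty, mul_zero, neg_zero, exp_zero, one_mul] at hsplit
  simp only [lyapSum, hw, mul_assoc, ← mul_sum]
  congr 1
  linarith

variable {s q : ℕ → ℝ} {N : ℕ}

lemma lyapSum_shift_le (h : q N ≤ exp (2 * ∑ i ∈ range N, s i) * q 0) :
    lyapSum (fun i => s (i + 1)) (fun j => q (j + 1)) N ≤ exp (2 * s 0) * lyapSum s q N := by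
  have : exp (-(2 * ∑ i ∈ range N, s i)) * q N ≤ q 0 := by
    rw [exp_neg, inv_mul_le_iff₀ (exp_pos _)]
    exact h
  rw [lyapSum_shift]
  gcongr
  linarith

lemma le_lyapSum_shift (h : exp (2 * ∑ i ∈ range N, s i) * q 0 ≤ q N) :
    exp (2 * s 0) * lyapSum s q N ≤ lyapSum (fun i => s (i + 1)) (fun j => q (j + 1)) N := by
  have : q 0 ≤ exp (-(2 * ∑ i ∈ range N, s i)) * q N := by
    rw [exp_neg, le_inv_mul_iff₀ (exp_pos _)]
    exact h
  rw [lyapSum_shift]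
  gcongr
  linarith

end LyapunovSums

section ObliqueProjection

variable {d : ℕ}

lemma projSub_eq_starProjection (V : Submodule ℝ (Euc d)) : projSub V = V.starProjection := rfl

/-- The projection onto `p` along `q`, written through orthogonal projections so that it depends
continuously on `(p, q)`. -/
def obliqueProj (p q : Submodule ℝ (Euc d)) : Euc d →L[ℝ] Euc d :=
  Ring.inverse ((1 : Euc d →L[ℝ] Euc d) - projSub p * projSub q) * (projSub p * (1 - projSub q))

variable {p q : Submodule ℝ (Euc d)}

lemma isUnit_one_sub_projSub_mul_projSub (h : IsCompl p q) :
    IsUnit ((1 : Euc d →L[ℝ] Euc d) - projSub p * projSub q) := by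
  rw [ContinuousLinearMap.isUnit_iff_bijective]
  have hinj : Function.Injective ⇑((1 : Euc d →L[ℝ] Euc d) - projSub p * projSub q) := by
    refine (injective_iff_map_eq_zero _).mpr fun w hw => ?_
    have hw' : projSub p (projSub q w) = w := (sub_eq_zero.mp hw).symm
    have hp : w ∈ p := hw' ▸ Submodule.starProjection_apply_mem p _
    have hq : w ∈ q := by
      rw [Submodule.mem_iff_norm_starProjection]
      refine le_antisymm (q.norm_starProjection_apply_le w) ?_
      calc ‖w‖ = ‖projSub p (projSub q w)‖ := by rw [hw']
        _ ≤ ‖q.starProjection w‖ := p.norm_starProjection_apply_le _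
    exact Submodule.disjoint_def.mp h.disjoint w hp hq
  exact ⟨hinj, LinearMap.injective_iff_surjective.mp hinj⟩

lemma obliqueProj_apply_of_mem_right {w : Euc d} (hw : w ∈ q) : obliqueProj p q w = 0 := by
  simp [obliqueProj, projSub_eq_starProjection, Submodule.starProjection_eq_self_iff.mpr hw]

lemma obliqueProj_apply_of_mem_left (h : IsCompl p q) {w : Euc d} (hw : w ∈ p) :
    obliqueProj p q w = w := by
  have hpw : projSub p w = w := Submodule.starProjection_eq_self_iff.mpr hw
  have hS : (projSub p * (1 - projSub q)) w = (1 - projSub p * projSub q) w := by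
    simp [hpw]
  calc obliqueProj p q w
      = (Ring.inverse (1 - projSub p * projSub q) * (1 - projSub p * projSub q)) w := by
        rw [obliqueProj, mul_apply_eq_comp, hS, mul_apply_eq_comp]
    _ = w := by rw [Ring.inverse_mul_cancel _ (isUnit_one_sub_projSub_mul_projSub h)]; rfl

lemma obliqueProj_add_obliqueProj (h : IsCompl p q) (w : Euc d) :
    obliqueProj p q w + obliqueProj q p w = w := by
  obtain ⟨y, hy, z, hz, rfl⟩ :=
    Submodule.mem_sup.mp (h.sup_eq_top ▸ Submodule.mem_top : w ∈ p ⊔ q)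
  rw [map_add, map_add, obliqueProj_apply_of_mem_left h hy, obliqueProj_apply_of_mem_right hz,
    obliqueProj_apply_of_mem_right hy, obliqueProj_apply_of_mem_left h.symm hz]
  abel

lemma ContinuousOn.obliqueProj {X : Type*} [TopologicalSpace X] {p q : X → Submodule ℝ (Euc d)}
    {s : Set X} (hp : ContinuousOn (fun x => projSub (p x)) s)
    (hq : ContinuousOn (fun x => projSub (q x)) s) (h : ∀ x ∈ s, IsCompl (p x) (q x)) :
    ContinuousOn (fun x => _root_.obliqueProj (p x) (q x)) s := by
  have hinv : ContinuousOn
      (fun x => Ring.inverse ((1 : Euc d →L[ℝ] Euc d) - projSub (p x) * projSub (q x))) s := by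
    intro x hx
    have hu := isUnit_one_sub_projSub_mul_projSub (h x hx)
    have hcont := NormedRing.inverse_continuousAt hu.unit
    rw [IsUnit.unit_spec] at hcont
    exact hcont.comp_continuousWithinAt (f := fun x => 1 - projSub (p x) * projSub (q x))
      ((continuousOn_const.sub (hp.mul hq)) x hx)
  exact hinv.mul (hp.mul (continuousOn_const.sub hq))

end ObliqueProjection

section Iterates

variable {d : ℕ} {f : Euc d → Euc d}

protected lemma ContDiff.iterate (hf : ContDiff ℝ 1 f) (n : ℕ) : ContDiff ℝ 1 f^[n] := by
  induction n with
  | zero => exact contDiff_id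
  | succ n ih => rw [Function.iterate_succ']; exact hf.comp ih

lemma fderiv_iterate_add_apply (hf : Differentiable ℝ f) (m n : ℕ) (x w : Euc d) :
    fderiv ℝ f^[m + n] x w = fderiv ℝ f^[m] (f^[n] x) (fderiv ℝ f^[n] x w) := by
  rw [Function.iterate_add, fderiv_comp x (hf.iterate m _) (hf.iterate n x)]
  rfl

lemma fderiv_iterate_succ_apply (hf : Differentiable ℝ f) (n : ℕ) (x w : Euc d) :
    fderiv ℝ f^[n + 1] x w = fderiv ℝ f^[n] (f x) (fderiv ℝ f x w) := by
  simpa using fderiv_iterate_add_apply hf n 1 x w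

lemma fderiv_iterate_succ_apply' (hf : Differentiable ℝ f) (n : ℕ) (x w : Euc d) :
    fderiv ℝ f^[n + 1] x w = fderiv ℝ f (f^[n] x) (fderiv ℝ f^[n] x w) := by
  simpa [add_comm n 1] using fderiv_iterate_add_apply hf 1 n x w

lemma fderiv_iterate_zero_apply (x w : Euc d) : fderiv ℝ f^[0] x w = w := by
  rw [Function.iterate_zero, fderiv_id, ContinuousLinearMap.id_apply]

variable {Λ : Set (Euc d)}

lemma fderiv_iterate_mem (hf : Differentiable ℝ f) (hmaps : MapsTo f Λ Λ)
    {V : Euc d → Submodule ℝ (Euc d)}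
    (hV : ∀ x ∈ Λ, (V x).map (fderiv ℝ f x : Euc d →ₗ[ℝ] Euc d) = V (f x))
    (n : ℕ) {x w : Euc d} (hx : x ∈ Λ) (hw : w ∈ V x) :
    fderiv ℝ f^[n] x w ∈ V (f^[n] x) := by
  induction n generalizing x w with
  | zero => simpa using hw
  | succ n ih =>
    rw [fderiv_iterate_succ_apply hf, Function.iterate_succ_apply]
    exact ih (hmaps hx) (hV x hx ▸ Submodule.mem_map_of_mem hw)

variable {M : ℝ} (hf : Differentiable ℝ f) (hmaps : MapsTo f Λ Λ) (hM1 : 1 ≤ M)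
  (hM : ∀ x ∈ Λ, ∀ w, ‖w‖ ≤ M * ‖fderiv ℝ f x w‖ ∧ ‖fderiv ℝ f x w‖ ≤ M * ‖w‖)
include hf hmaps hM1 hM

lemma norm_le_pow_mul_norm_fderiv_iterate (n : ℕ) {x : Euc d} (hx : x ∈ Λ) (w : Euc d) :
    ‖w‖ ≤ M ^ n * ‖fderiv ℝ f^[n] x w‖ := by
  induction n generalizing x w with
  | zero => simp
  | succ n ih =>
    calc ‖w‖ ≤ M * ‖fderiv ℝ f x w‖ := (hM x hx w).1
      _ ≤ M * (M ^ n * ‖fderiv ℝ f^[n] (f x) (fderiv ℝ f x w)‖) :=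
        mul_le_mul_of_nonneg_left (ih (hmaps hx) _) (by linarith)
      _ = M ^ (n + 1) * ‖fderiv ℝ f^[n + 1] x w‖ := by
        rw [fderiv_iterate_succ_apply hf]; ring

lemma norm_fderiv_iterate_pos (n : ℕ) {x : Euc d} (hx : x ∈ Λ) {w : Euc d} (hw : w ≠ 0) :
    0 < ‖fderiv ℝ f^[n] x w‖ :=
  pos_of_mul_pos_right ((norm_pos_iff.mpr hw).trans_le
    (norm_le_pow_mul_norm_fderiv_iterate hf hmaps hM1 hM n hx w)) (by positivity)

lemma abs_log_norm_fderiv_iterate_succ_sub_le {x : Euc d} (hx : x ∈ Λ) {w : Euc d}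
    (hw : w ≠ 0) (n : ℕ) :
    |log ‖fderiv ℝ f^[n + 1] x w‖ - log ‖fderiv ℝ f^[n] x w‖| ≤ log M := by
  have hy := hmaps.iterate n hx
  have hpos' := norm_fderiv_iterate_pos hf hmaps hM1 hM (n + 1) hx hw
  rw [fderiv_iterate_succ_apply' hf] at hpos' ⊢
  exact abs_log_sub_log_le hpos' (norm_fderiv_iterate_pos hf hmaps hM1 hM n hx hw)
    (hM _ hy _).2 (hM _ hy _).1

end Iterates

theorem exists_bound_fderiv_of_leftInverse {d : ℕ} {f g : Euc d → Euc d} {Λ : Set (Euc d)}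
    (hΛ : IsCompact Λ) (hmaps : MapsTo f Λ Λ) (hf : ContDiff ℝ 1 f) (hg : ContDiff ℝ 1 g)
    (hgf : Function.LeftInverse g f) :
    ∃ M, 1 ≤ M ∧ ∀ x ∈ Λ, ∀ w, ‖w‖ ≤ M * ‖fderiv ℝ f x w‖ ∧ ‖fderiv ℝ f x w‖ ≤ M * ‖w‖ := by
  obtain ⟨Mf, hMf⟩ :=
    hΛ.exists_bound_of_continuousOn (hf.continuous_fderiv one_ne_zero).continuousOn
  obtain ⟨Mg, hMg⟩ :=
    hΛ.exists_bound_of_continuousOn (hg.continuous_fderiv one_ne_zero).continuousOn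
  refine ⟨max (max Mf Mg) 1, le_max_right _ _, fun x hx w => ⟨?_, ?_⟩⟩
  · have hchain := fderiv_comp x ((hg.differentiable one_ne_zero) (f x))
      ((hf.differentiable one_ne_zero) x)
    rw [hgf.comp_eq_id, fderiv_id] at hchain
    calc ‖w‖ = ‖fderiv ℝ g (f x) (fderiv ℝ f x w)‖ := by
          rw [← ContinuousLinearMap.comp_apply, ← hchain, ContinuousLinearMap.id_apply]
      _ ≤ ‖fderiv ℝ g (f x)‖ * ‖fderiv ℝ f x w‖ := ContinuousLinearMap.le_opNorm _ _
      _ ≤ _ := by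
          gcongr
          exact (hMg _ (hmaps hx)).trans ((le_max_right _ _).trans (le_max_left _ _))
  · calc ‖fderiv ℝ f x w‖ ≤ ‖fderiv ℝ f x‖ * ‖w‖ := ContinuousLinearMap.le_opNorm _ _
      _ ≤ _ := by
          gcongr
          exact (hMf x hx).trans ((le_max_left _ _).trans (le_max_left _ _))

section GrowthRate

variable {d : ℕ} {f : Euc d → Euc d} {Λ : Set (Euc d)} {E F : Euc d → Submodule ℝ (Euc d)}
  {C lam : ℝ} {K : ℕ} {δ : ℝ}

/-- The clamp `δ > 0` keeps this finite and continuous where `E` is trivial. -/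
def logGrowth (f : Euc d → Euc d) (E : Euc d → Submodule ℝ (Euc d)) (K : ℕ) (δ : ℝ)
    (z : Euc d) : ℝ :=
  log (max ‖(fderiv ℝ f^[K] z).comp (projSub (E z))‖ δ)

lemma continuousOn_logGrowth (hf : ContDiff ℝ 1 f)
    (hQE : ContinuousOn (fun x => projSub (E x)) Λ) (hδ : 0 < δ) :
    ContinuousOn (logGrowth f E K δ) Λ :=
  ((((hf.iterate K).continuous_fderiv one_ne_zero).continuousOn.clm_comp hQE).norm.sup
    continuousOn_const).log fun _ _ => (hδ.trans_le (le_max_right _ _)).ne'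

lemma exp_logGrowth (hδ : 0 < δ) (z : Euc d) :
    exp (logGrowth f E K δ z) = max ‖(fderiv ℝ f^[K] z).comp (projSub (E z))‖ δ :=
  exp_log (hδ.trans_le (le_max_right _ _))

lemma norm_fderiv_iterate_le_exp_logGrowth (hδ : 0 < δ) {z e : Euc d} (he : e ∈ E z) :
    ‖fderiv ℝ f^[K] z e‖ ≤ exp (logGrowth f E K δ z) * ‖e‖ := by
  have hQ : projSub (E z) e = e := Submodule.starProjection_eq_self_iff.mpr he
  rw [exp_logGrowth hδ]
  calc ‖fderiv ℝ f^[K] z e‖ = ‖(fderiv ℝ f^[K] z).comp (projSub (E z)) e‖ := by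
        rw [ContinuousLinearMap.comp_apply, hQ]
    _ ≤ _ := ContinuousLinearMap.le_opNorm _ _
    _ ≤ _ := by gcongr; exact le_max_left _ _

lemma exp_logGrowth_mul_le (hdom : DomIneq f Λ E F C lam) (hδ : 0 < δ) {z v : Euc d}
    (hz : z ∈ Λ) (hv : v ∈ F z) (hv0 : v ≠ 0)
    (hδv : δ * ‖v‖ ≤ C * lam ^ K * ‖fderiv ℝ f^[K] z v‖) :
    exp (logGrowth f E K δ z) * ‖v‖ ≤ C * lam ^ K * ‖fderiv ℝ f^[K] z v‖ := by
  have hv0' := norm_pos_iff.mpr hv0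
  have hbound : 0 ≤ C * lam ^ K * ‖fderiv ℝ f^[K] z v‖ / ‖v‖ :=
    div_nonneg ((mul_nonneg hδ.le hv0'.le).trans hδv) hv0'.le
  rw [exp_logGrowth hδ, max_mul_of_nonneg _ _ hv0'.le]
  refine max_le ?_ hδv
  rw [← le_div_iff₀ hv0']
  refine ContinuousLinearMap.opNorm_le_bound _ hbound fun ζ => ?_
  rw [ContinuousLinearMap.comp_apply]
  set e := projSub (E z) ζ
  have he : ‖e‖ ≤ ‖ζ‖ := (E z).norm_starProjection_apply_le ζ
  rcases eq_or_ne e 0 with he0 | he0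
  · rw [he0, map_zero, norm_zero]
    positivity
  have hdomζ := hdom z hz K e ((E z).starProjection_apply_mem ζ) he0 v hv hv0
  rw [div_le_iff₀ (norm_pos_iff.mpr he0), ← mul_div_assoc] at hdomζ
  exact hdomζ.trans (by gcongr)

end GrowthRate

section WindowRate

variable {d : ℕ} {f : Euc d → Euc d} {Λ : Set (Euc d)} {E F : Euc d → Submodule ℝ (Euc d)}
  {M C lam : ℝ} {K : ℕ} {δ : ℝ}
  (hf : Differentiable ℝ f) (hmaps : MapsTo f Λ Λ) (hM1 : 1 ≤ M)
  (hM : ∀ x ∈ Λ, ∀ w, ‖w‖ ≤ M * ‖fderiv ℝ f x w‖ ∧ ‖fderiv ℝ f x w‖ ≤ M * ‖w‖)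
include hf hmaps hM1 hM

lemma log_norm_fderiv_iterate_add_sub_le_logGrowth
    (hE : ∀ x ∈ Λ, (E x).map (fderiv ℝ f x : Euc d →ₗ[ℝ] Euc d) = E (f x)) (hδ : 0 < δ)
    {x u : Euc d} (hx : x ∈ Λ) (hu : u ∈ E x) (hu0 : u ≠ 0) (k : ℕ) :
    log ‖fderiv ℝ f^[k + K] x u‖ - log ‖fderiv ℝ f^[k] x u‖ ≤ logGrowth f E K δ (f^[k] x) := by
  rw [log_sub_log_le_iff (norm_fderiv_iterate_pos hf hmaps hM1 hM _ hx hu0)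
    (norm_fderiv_iterate_pos hf hmaps hM1 hM _ hx hu0), add_comm, fderiv_iterate_add_apply hf]
  exact norm_fderiv_iterate_le_exp_logGrowth hδ (fderiv_iterate_mem hf hmaps hE k hx hu)

lemma logGrowth_sub_le_log_norm_fderiv_iterate_add_sub
    (hF : ∀ x ∈ Λ, (F x).map (fderiv ℝ f x : Euc d →ₗ[ℝ] Euc d) = F (f x))
    (hdom : DomIneq f Λ E F C lam) (hC : 0 < C) (hlam0 : 0 < lam)
    {x v : Euc d} (hx : x ∈ Λ) (hv : v ∈ F x) (hv0 : v ≠ 0) (k : ℕ) :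
    logGrowth f E K (C * lam ^ K / M ^ K) (f^[k] x) - log (C * lam ^ K) ≤
      log ‖fderiv ℝ f^[k + K] x v‖ - log ‖fderiv ℝ f^[k] x v‖ := by
  have hy := hmaps.iterate k hx
  have hCl : 0 < C * lam ^ K := by positivity
  have hpos := norm_fderiv_iterate_pos hf hmaps hM1 hM k hx hv0
  rw [le_log_sub_log_iff (norm_fderiv_iterate_pos hf hmaps hM1 hM _ hx hv0) hpos, add_comm,
    fderiv_iterate_add_apply hf, exp_sub, exp_log hCl, div_mul_eq_mul_div, div_le_iff₀ hCl,
    mul_comm _ (C * lam ^ K)]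
  set e := fderiv ℝ f^[k] x v
  refine exp_logGrowth_mul_le hdom (by positivity) hy (fderiv_iterate_mem hf hmaps hF k hx hv)
    (norm_pos_iff.mp hpos) ?_
  have he := norm_le_pow_mul_norm_fderiv_iterate hf hmaps hM1 hM K hy e
  rw [div_mul_eq_mul_div, div_le_iff₀ (by positivity)]
  calc C * lam ^ K * ‖e‖ ≤ C * lam ^ K * (M ^ K * ‖fderiv ℝ f^[K] (f^[k] x) e‖) := by gcongr
    _ = _ := by ring

end WindowRate

theorem exists_rate_of_domIneq {d : ℕ} {f : Euc d → Euc d} {Λ : Set (Euc d)}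
    {E F : Euc d → Submodule ℝ (Euc d)} {M C lam : ℝ}
    (hf : ContDiff ℝ 1 f) (hmaps : MapsTo f Λ Λ) (hM1 : 1 ≤ M)
    (hM : ∀ x ∈ Λ, ∀ w, ‖w‖ ≤ M * ‖fderiv ℝ f x w‖ ∧ ‖fderiv ℝ f x w‖ ≤ M * ‖w‖)
    (hE : ∀ x ∈ Λ, (E x).map (fderiv ℝ f x : Euc d →ₗ[ℝ] Euc d) = E (f x))
    (hF : ∀ x ∈ Λ, (F x).map (fderiv ℝ f x : Euc d →ₗ[ℝ] Euc d) = F (f x))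
    (hQE : ContinuousOn (fun x => projSub (E x)) Λ)
    (hC : 0 < C) (hlam0 : 0 < lam) (hlam1 : lam < 1) (hdom : DomIneq f Λ E F C lam) :
    ∃ (ψ : Euc d → ℝ) (γ : ℝ) (N : ℕ), 0 < γ ∧ 0 < N ∧ ContinuousOn ψ Λ ∧
      (∀ x ∈ Λ, ∀ u ∈ E x, u ≠ 0 →
        ‖fderiv ℝ f^[N] x u‖ ≤ exp (∑ i ∈ range N, ψ (f^[i] x)) * ‖u‖) ∧
      (∀ x ∈ Λ, ∀ v ∈ F x, v ≠ 0 →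
        exp (∑ i ∈ range N, (ψ (f^[i] x) + γ)) * ‖v‖ ≤ ‖fderiv ℝ f^[N] x v‖) := by
  have hd := hf.differentiable one_ne_zero
  have hlog : 0 < -log lam := neg_pos.mpr (log_neg hlam0 hlam1)
  -- Each window of length `K` loses `O(log M / K)` per step, and `C` costs `log C / K` per step;
  -- `K` is taken so large that these losses stay below the gap `-log lam`.
  obtain ⟨K, hK⟩ := exists_nat_gt (max 0 ((log C + 4 * log M) / -log lam))
  have hK0 : (0 : ℝ) < K := (le_max_left _ _).trans_lt hK
  have hKpos : 0 < K := Nat.cast_pos.mp hK0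
  have hKgap : (log C + 4 * log M) / K < -log lam := by
    have := (div_lt_iff₀ hlog).mp ((le_max_right _ _).trans_lt hK)
    rw [div_lt_iff₀ hK0]
    linarith
  set δ := C * lam ^ K / M ^ K
  have hδ : 0 < δ := by positivity
  set Φ := logGrowth f E K δ
  refine ⟨fun z => (Φ z + 2 * log M) / K, -log lam - (log C + 4 * log M) / K, K * K,
    by linarith, Nat.mul_pos hKpos hKpos,
    ((continuousOn_logGrowth hf hQE hδ).add continuousOn_const).div_const _,
    fun x hx u hu hu0 => ?_, fun x hx v hv hv0 => ?_⟩
  · have hwin := sub_le_sum_of_sub_shift_le (ℓ := fun j => log ‖fderiv ℝ f^[j] x u‖)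
      (abs_log_norm_fderiv_iterate_succ_sub_le hd hmaps hM1 hM hx hu0) hKpos
      (log_norm_fderiv_iterate_add_sub_le_logGrowth (K := K) hd hmaps hM1 hM hE hδ hx hu hu0)
    rw [fderiv_iterate_zero_apply] at hwin
    exact (log_sub_log_le_iff (norm_fderiv_iterate_pos hd hmaps hM1 hM _ hx hu0)
      (norm_pos_iff.mpr hu0)).mp hwin
  · have hwin := sum_le_sub_of_le_sub_shift (ℓ := fun j => log ‖fderiv ℝ f^[j] x v‖)
      (abs_log_norm_fderiv_iterate_succ_sub_le hd hmaps hM1 hM hx hv0) hKpos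
      (logGrowth_sub_le_log_norm_fderiv_iterate_add_sub (K := K) hd hmaps hM1 hM hF hdom hC hlam0
        hx hv hv0)
    rw [fderiv_iterate_zero_apply] at hwin
    refine (le_log_sub_log_iff (norm_fderiv_iterate_pos hd hmaps hM1 hM _ hx hv0)
      (norm_pos_iff.mpr hv0)).mp (le_of_eq_of_le (sum_congr rfl fun k _ => ?_) hwin)
    rw [log_mul hC.ne' (by positivity), log_pow]
    field_simp
    ring

section LyapunovForm

variable {d : ℕ} {f : Euc d → Euc d} {ψ : Euc d → ℝ} {N : ℕ}

def lyapForm (f : Euc d → Euc d) (ψ : Euc d → ℝ) (N : ℕ) (x : Euc d) :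
    Euc d →L[ℝ] Euc d →L[ℝ] ℝ :=
  ∑ j ∈ range N, exp (-(2 * ∑ i ∈ range j, ψ (f^[i] x))) •
    (innerSL ℝ).bilinearComp (fderiv ℝ f^[j] x) (fderiv ℝ f^[j] x)

lemma lyapForm_apply (x w w' : Euc d) :
    lyapForm f ψ N x w w' = ∑ j ∈ range N, exp (-(2 * ∑ i ∈ range j, ψ (f^[i] x))) *
      inner ℝ (fderiv ℝ f^[j] x w) (fderiv ℝ f^[j] x w') := by
  simp [lyapForm]

lemma lyapForm_comm (x w w' : Euc d) : lyapForm f ψ N x w w' = lyapForm f ψ N x w' w := by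
  simp only [lyapForm_apply, real_inner_comm]

lemma lyapForm_apply_self (x w : Euc d) :
    lyapForm f ψ N x w w =
      lyapSum (fun i => ψ (f^[i] x)) (fun j => ‖fderiv ℝ f^[j] x w‖ ^ 2) N := by
  simp only [lyapForm_apply, lyapSum, real_inner_self_eq_norm_sq]

lemma norm_sq_le_lyapForm (hN : 0 < N) (x w : Euc d) : ‖w‖ ^ 2 ≤ lyapForm f ψ N x w w := by
  rw [lyapForm_apply_self, lyapSum]
  have := single_le_sum (f := fun j => exp (-(2 * ∑ i ∈ range j, ψ (f^[i] x))) *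
    ‖fderiv ℝ f^[j] x w‖ ^ 2) (fun j _ => by positivity) (mem_range.mpr hN)
  simpa [fderiv_iterate_zero_apply] using this

lemma lyapForm_apply_fderiv (hf : Differentiable ℝ f) (x w : Euc d) :
    lyapForm f ψ N (f x) (fderiv ℝ f x w) (fderiv ℝ f x w) =
      lyapSum (fun i => ψ (f^[i + 1] x)) (fun j => ‖fderiv ℝ f^[j + 1] x w‖ ^ 2) N := by
  simp only [lyapForm_apply_self, Function.iterate_succ_apply, fderiv_iterate_succ_apply hf]

lemma lyapForm_apply_fderiv_le (hf : Differentiable ℝ f) {x w : Euc d}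
    (h : ‖fderiv ℝ f^[N] x w‖ ≤ exp (∑ i ∈ range N, ψ (f^[i] x)) * ‖w‖) :
    lyapForm f ψ N (f x) (fderiv ℝ f x w) (fderiv ℝ f x w) ≤
      exp (2 * ψ x) * lyapForm f ψ N x w w := by
  rw [lyapForm_apply_fderiv hf, lyapForm_apply_self]
  refine lyapSum_shift_le (s := fun i => ψ (f^[i] x)) (q := fun j => ‖fderiv ℝ f^[j] x w‖ ^ 2) ?_
  rw [fderiv_iterate_zero_apply, show (2 : ℝ) = (2 : ℕ) by norm_num, exp_nat_mul, ← mul_pow]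
  exact pow_le_pow_left₀ (norm_nonneg _) h 2

lemma le_lyapForm_apply_fderiv (hf : Differentiable ℝ f) {x w : Euc d}
    (h : exp (∑ i ∈ range N, ψ (f^[i] x)) * ‖w‖ ≤ ‖fderiv ℝ f^[N] x w‖) :
    exp (2 * ψ x) * lyapForm f ψ N x w w ≤
      lyapForm f ψ N (f x) (fderiv ℝ f x w) (fderiv ℝ f x w) := by
  rw [lyapForm_apply_fderiv hf, lyapForm_apply_self]
  refine le_lyapSum_shift (s := fun i => ψ (f^[i] x)) (q := fun j => ‖fderiv ℝ f^[j] x w‖ ^ 2) ?_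
  rw [fderiv_iterate_zero_apply, show (2 : ℝ) = (2 : ℕ) by norm_num, exp_nat_mul, ← mul_pow]
  exact pow_le_pow_left₀ (by positivity) h 2

lemma continuousOn_lyapForm {Λ : Set (Euc d)} (hf : ContDiff ℝ 1 f) (hmaps : MapsTo f Λ Λ)
    (hψ : ContinuousOn ψ Λ) : ContinuousOn (lyapForm f ψ N) Λ := by
  refine continuousOn_clm_apply.mpr fun w => continuousOn_clm_apply.mpr fun w' => ?_
  simp only [lyapForm_apply]
  refine continuousOn_finsetSum _ fun j _ => ContinuousOn.mul ?_ (Continuous.continuousOn ?_)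
  · exact ((continuousOn_finsetSum _ fun i _ => hψ.comp (hf.iterate i).continuous.continuousOn
      (hmaps.iterate i)).const_smul (2 : ℝ)).neg.rexp
  · have hD := (hf.iterate j).continuous_fderiv one_ne_zero
    exact (hD.clm_apply continuous_const).inner (hD.clm_apply continuous_const)

end LyapunovForm

section AdaptedForm

variable {d : ℕ} {f : Euc d → Euc d} {Λ : Set (Euc d)} {E F : Euc d → Submodule ℝ (Euc d)}
  {ψE ψF : Euc d → ℝ} {N : ℕ}

def adaptedForm (f : Euc d → Euc d) (E F : Euc d → Submodule ℝ (Euc d)) (ψE ψF : Euc d → ℝ)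
    (N : ℕ) (x : Euc d) : Euc d →L[ℝ] Euc d →L[ℝ] ℝ :=
  (lyapForm f ψE N x).bilinearComp (obliqueProj (E x) (F x)) (obliqueProj (E x) (F x)) +
    (lyapForm f ψF N x).bilinearComp (obliqueProj (F x) (E x)) (obliqueProj (F x) (E x))

lemma adaptedForm_apply (x w w' : Euc d) :
    adaptedForm f E F ψE ψF N x w w' =
      lyapForm f ψE N x (obliqueProj (E x) (F x) w) (obliqueProj (E x) (F x) w') +
        lyapForm f ψF N x (obliqueProj (F x) (E x) w) (obliqueProj (F x) (E x) w') :=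
  rfl

lemma adaptedForm_comm (x w w' : Euc d) :
    adaptedForm f E F ψE ψF N x w w' = adaptedForm f E F ψE ψF N x w' w := by
  rw [adaptedForm_apply, adaptedForm_apply, lyapForm_comm, lyapForm_comm (ψ := ψF)]

lemma adaptedForm_apply_of_mem_left {x u : Euc d} (h : IsCompl (E x) (F x)) (hu : u ∈ E x) :
    adaptedForm f E F ψE ψF N x u u = lyapForm f ψE N x u u := by
  simp [adaptedForm_apply, obliqueProj_apply_of_mem_left h hu, obliqueProj_apply_of_mem_right hu]

lemma adaptedForm_apply_of_mem_right {x v : Euc d} (h : IsCompl (E x) (F x)) (hv : v ∈ F x) :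
    adaptedForm f E F ψE ψF N x v v = lyapForm f ψF N x v v := by
  simp [adaptedForm_apply, obliqueProj_apply_of_mem_left h.symm hv,
    obliqueProj_apply_of_mem_right hv]

lemma half_norm_sq_le_adaptedForm (hN : 0 < N) {x : Euc d} (h : IsCompl (E x) (F x))
    (w : Euc d) : ‖w‖ ^ 2 / 2 ≤ adaptedForm f E F ψE ψF N x w w := by
  have hE := norm_sq_le_lyapForm (f := f) (ψ := ψE) hN x (obliqueProj (E x) (F x) w)
  have hF := norm_sq_le_lyapForm (f := f) (ψ := ψF) hN x (obliqueProj (F x) (E x) w)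
  have hw := norm_add_le (obliqueProj (E x) (F x) w) (obliqueProj (F x) (E x) w)
  rw [obliqueProj_add_obliqueProj h] at hw
  rw [adaptedForm_apply]
  nlinarith [norm_nonneg w, sq_nonneg (‖obliqueProj (E x) (F x) w‖ - ‖obliqueProj (F x) (E x) w‖)]

lemma continuousOn_adaptedForm (hf : ContDiff ℝ 1 f) (hmaps : MapsTo f Λ Λ)
    (hψE : ContinuousOn ψE Λ) (hψF : ContinuousOn ψF Λ)
    (hQE : ContinuousOn (fun x => projSub (E x)) Λ) (hQF : ContinuousOn (fun x => projSub (F x)) Λ)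
    (hcompl : ∀ x ∈ Λ, IsCompl (E x) (F x)) :
    ContinuousOn (adaptedForm f E F ψE ψF N) Λ := by
  have hPE := ContinuousOn.obliqueProj hQE hQF hcompl
  have hPF := ContinuousOn.obliqueProj hQF hQE fun x hx => (hcompl x hx).symm
  have hLE := continuousOn_lyapForm (N := N) hf hmaps hψE
  have hLF := continuousOn_lyapForm (N := N) hf hmaps hψF
  refine continuousOn_clm_apply.mpr fun w => continuousOn_clm_apply.mpr fun w' => ?_
  simp only [adaptedForm_apply]
  exact ((hLE.clm_apply (hPE.clm_apply continuousOn_const)).clm_apply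
    (hPE.clm_apply continuousOn_const)).add
    ((hLF.clm_apply (hPF.clm_apply continuousOn_const)).clm_apply
      (hPF.clm_apply continuousOn_const))

variable {γ : ℝ} (hf : Differentiable ℝ f) (hmaps : MapsTo f Λ Λ) (hN : 0 < N)
  (hcompl : ∀ x ∈ Λ, IsCompl (E x) (F x))
  (hE : ∀ x ∈ Λ, (E x).map (fderiv ℝ f x : Euc d →ₗ[ℝ] Euc d) = E (f x))
  (hF : ∀ x ∈ Λ, (F x).map (fderiv ℝ f x : Euc d →ₗ[ℝ] Euc d) = F (f x))
include hf hmaps hN hcompl hE hF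

theorem adaptedForm_domination {ψ : Euc d → ℝ}
    (hgrowE : ∀ x ∈ Λ, ∀ u ∈ E x, u ≠ 0 →
      ‖fderiv ℝ f^[N] x u‖ ≤ exp (∑ i ∈ range N, ψ (f^[i] x)) * ‖u‖)
    (hgrowF : ∀ x ∈ Λ, ∀ v ∈ F x, v ≠ 0 →
      exp (∑ i ∈ range N, (ψ (f^[i] x) + γ)) * ‖v‖ ≤ ‖fderiv ℝ f^[N] x v‖)
    {x : Euc d} (hx : x ∈ Λ) {u v : Euc d} (hu : u ∈ E x) (hu0 : u ≠ 0) (hv : v ∈ F x)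
    (hv0 : v ≠ 0) :
    let B := adaptedForm f E F ψ (fun z => ψ z + γ) N
    √(B (f x) (fderiv ℝ f x u) (fderiv ℝ f x u)) / √(B x u u) ≤
      exp (-γ) * (√(B (f x) (fderiv ℝ f x v) (fderiv ℝ f x v)) / √(B x v v)) := by
  intro B
  have hfx := hcompl _ (hmaps hx)
  have hDu : fderiv ℝ f x u ∈ E (f x) := by simpa using fderiv_iterate_mem hf hmaps hE 1 hx hu
  have hDv : fderiv ℝ f x v ∈ F (f x) := by simpa using fderiv_iterate_mem hf hmaps hF 1 hx hv
  have hBu : 0 < √(B x u u) := sqrt_pos.mpr <| (pow_pos (norm_pos_iff.mpr hu0) 2).trans_le <|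
    (adaptedForm_apply_of_mem_left (hcompl x hx) hu).symm ▸ norm_sq_le_lyapForm hN x u
  have hBv : 0 < √(B x v v) := sqrt_pos.mpr <| (pow_pos (norm_pos_iff.mpr hv0) 2).trans_le <|
    (adaptedForm_apply_of_mem_right (hcompl x hx) hv).symm ▸ norm_sq_le_lyapForm hN x v
  have hcontr : √(B (f x) (fderiv ℝ f x u) (fderiv ℝ f x u)) ≤ exp (ψ x) * √(B x u u) := by
    rw [← sqrt_exp_two_mul_mul]
    refine sqrt_le_sqrt ?_
    simp only [B, adaptedForm_apply_of_mem_left hfx hDu,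
      adaptedForm_apply_of_mem_left (hcompl x hx) hu]
    exact lyapForm_apply_fderiv_le hf (hgrowE x hx u hu hu0)
  have hexp : exp (ψ x + γ) * √(B x v v) ≤ √(B (f x) (fderiv ℝ f x v) (fderiv ℝ f x v)) := by
    rw [← sqrt_exp_two_mul_mul]
    refine sqrt_le_sqrt ?_
    simp only [B, adaptedForm_apply_of_mem_right hfx hDv,
      adaptedForm_apply_of_mem_right (hcompl x hx) hv]
    exact le_lyapForm_apply_fderiv (ψ := fun z => ψ z + γ) hf (hgrowF x hx v hv hv0)
  calc √(B (f x) (fderiv ℝ f x u) (fderiv ℝ f x u)) / √(B x u u)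
      ≤ exp (-γ) * exp (ψ x + γ) := by
        rw [← exp_add, show -γ + (ψ x + γ) = ψ x by ring, div_le_iff₀ hBu]
        exact hcontr
    _ ≤ _ := by
        gcongr
        rwa [le_div_iff₀ hBv]

end AdaptedForm

theorem exists_uniform_sqrt_bounds {X V : Type*} [TopologicalSpace X] [NormedAddCommGroup V]
    [NormedSpace ℝ V] {Λ : Set X} (hΛ : IsCompact Λ) {B : X → V →L[ℝ] V →L[ℝ] ℝ}
    (hB : ContinuousOn B Λ) (hlow : ∀ x ∈ Λ, ∀ w, ‖w‖ ^ 2 / 2 ≤ B x w w) :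
    ∃ c, 1 ≤ c ∧ ∀ x ∈ Λ, ∀ w, c⁻¹ * ‖w‖ ≤ √(B x w w) ∧ √(B x w w) ≤ c * ‖w‖ := by
  obtain ⟨c₁, hc₁⟩ := hΛ.exists_bound_of_continuousOn (f := B) hB
  refine ⟨max c₁ 2, by linarith [le_max_right c₁ 2], fun x hx w =>
    inv_mul_le_sqrt_and_sqrt_le_mul (norm_nonneg w) (hlow x hx w) ?_⟩
  calc B x w w ≤ ‖B x w w‖ := le_norm_self _
    _ ≤ ‖B x‖ * ‖w‖ * ‖w‖ := (B x).le_opNorm₂ w w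
    _ ≤ c₁ * ‖w‖ ^ 2 := by rw [mul_assoc, ← sq]; gcongr; exact hc₁ x hx

theorem exists_adapted_norms_general
    {d : ℕ} (f : Euc d → Euc d) (hf : IsC1Diffeo f)
    (Λ : Set (Euc d)) (hΛ : IsCompact Λ) (hinv : f '' Λ = Λ)
    (E F : Euc d → Submodule ℝ (Euc d))
    (C lam : ℝ) (hC : 0 < C) (hlam0 : 0 < lam) (hlam1 : lam < 1)
    (hds : IsDomSplitting f Λ E F C lam) :
    ∃ (B : Euc d → (Euc d →L[ℝ] Euc d →L[ℝ] ℝ)) (lam' : ℝ) (c : ℝ),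
      0 < lam' ∧ lam' < 1 ∧ 1 ≤ c ∧
      -- continuity of the family of inner products on Λ
      ContinuousOn B Λ ∧
      -- each B x is a (symmetric, positive definite) inner product
      (∀ x ∈ Λ, ∀ u v : Euc d, B x u v = B x v u) ∧
      (∀ x ∈ Λ, ∀ v : Euc d, v ≠ 0 → 0 < B x v v) ∧
      -- the induced norms are uniformly equivalent to the Euclidean norm
      (∀ x ∈ Λ, ∀ v : Euc d,
        c⁻¹ * ‖v‖ ≤ Real.sqrt (B x v v) ∧ Real.sqrt (B x v v) ≤ c * ‖v‖) ∧
      -- one-step domination in the adapted norms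
      (∀ x ∈ Λ, ∀ u ∈ E x, u ≠ 0 → ∀ v ∈ F x, v ≠ 0 →
        Real.sqrt (B (f x) (fderiv ℝ f x u) (fderiv ℝ f x u)) / Real.sqrt (B x u u) ≤
        lam' * (Real.sqrt (B (f x) (fderiv ℝ f x v) (fderiv ℝ f x v)) / Real.sqrt (B x v v))) := by
  obtain ⟨-, hcf, g, hcg, hgf, -⟩ := hf
  obtain ⟨hcompl, hE, hF, hQE, hQF, hdom⟩ := hds
  have hmaps : MapsTo f Λ Λ := (mapsTo_image f Λ).mono_right hinv.subset
  obtain ⟨M, hM1, hM⟩ := exists_bound_fderiv_of_leftInverse hΛ hmaps hcf hcg hgf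
  obtain ⟨ψ, γ, N, hγ, hN, hψ, hgrowE, hgrowF⟩ :=
    exists_rate_of_domIneq hcf hmaps hM1 hM hE hF hQE hC hlam0 hlam1 hdom
  have hlow := fun x hx => half_norm_sq_le_adaptedForm (f := f) (ψE := ψ)
    (ψF := fun z => ψ z + γ) hN (hcompl x hx)
  have hB := continuousOn_adaptedForm (N := N) (ψF := fun z => ψ z + γ) hcf hmaps hψ
    (hψ.add continuousOn_const) hQE hQF hcompl
  obtain ⟨c, hc1, hc⟩ := exists_uniform_sqrt_bounds hΛ hB hlow
  refine ⟨_, exp (-γ), c, exp_pos _, exp_lt_one_iff.mpr (neg_neg_of_pos hγ), hc1, hB,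
    fun x _ => adaptedForm_comm x, fun x hx v hv => ?_, hc, fun x hx u hu hu0 v hv hv0 =>
    adaptedForm_domination (hcf.differentiable one_ne_zero) hmaps hN hcompl hE hF hgrowE hgrowF hx
      hu hu0 hv hv0⟩
  exact (div_pos (pow_pos (norm_pos_iff.mpr hv) 2) two_pos).trans_le (hlow x hx v)

/-- Gourmelon: existence of an adapted family of inner products
in which the domination is seen in one step. -/
theorem exists_adapted_norms
    {d : ℕ} (hd : 1 ≤ d) (f : Euc d → Euc d) (hf : IsC1Diffeo f)
    (Λ : Set (Euc d)) (hΛ : IsCompact Λ) (hinv : f '' Λ = Λ)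
    (E F : Euc d → Submodule ℝ (Euc d))
    (C lam : ℝ) (hC : 0 < C) (hlam0 : 0 < lam) (hlam1 : lam < 1)
    (hds : IsDomSplitting f Λ E F C lam) :
    ∃ (B : Euc d → (Euc d →L[ℝ] Euc d →L[ℝ] ℝ)) (lam' : ℝ) (c : ℝ),
      0 < lam' ∧ lam' < 1 ∧ 1 ≤ c ∧
      -- continuity of the family of inner products on Λ
      ContinuousOn B Λ ∧
      -- each B x is a (symmetric, positive definite) inner product
      (∀ x ∈ Λ, ∀ u v : Euc d, B x u v = B x v u) ∧
      (∀ x ∈ Λ, ∀ v : Euc d, v ≠ 0 → 0 < B x v v) ∧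
      -- the induced norms are uniformly equivalent to the Euclidean norm
      (∀ x ∈ Λ, ∀ v : Euc d,
        c⁻¹ * ‖v‖ ≤ Real.sqrt (B x v v) ∧ Real.sqrt (B x v v) ≤ c * ‖v‖) ∧
      -- one-step domination in the adapted norms
      (∀ x ∈ Λ, ∀ u ∈ E x, u ≠ 0 → ∀ v ∈ F x, v ≠ 0 →
        Real.sqrt (B (f x) (fderiv ℝ f x u) (fderiv ℝ f x u)) / Real.sqrt (B x u u) ≤
        lam' * (Real.sqrt (B (f x) (fderiv ℝ f x v) (fderiv ℝ f x v)) / Real.sqrt (B x v v))) :=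
  exists_adapted_norms_general f hf Λ hΛ hinv E F C lam hC hlam0 hlam1 hds
end
end
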